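/- arXiv:2106.13641 — 2 statements merged into one kernel-verified Lean document; each statement's English description precedes it below -/
import Mathlib

section
/- For the antisymmetric 6×6 matrix L built from reals c₁, c₂, c₃ as in the CD-grid stabilization, the kernel of L (and hence of L²) has dimension at least 2 whenever (c₁, c₂, c₃) ≠ (0,0,0); explicitly, the vectors (c₃, 0, c₂, 0, c₁, 0) and (0, c₃, 0, c₂, 0, c₁) lie in ker L. -/
noncomputable section

/-- The Fourier symbol `L` of the edge-jump coupling for the CD-grid stabilization. -/
def Lmat (c1 c2 c3 : ℝ) : Matrix (Fin 6) (Fin 6) ℝ :=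
  !![0, 0, c1, 0, -c2, 0;
     0, 0, 0, c1, 0, -c2;
     -c1, 0, 0, 0, c3, 0;
     0, -c1, 0, 0, 0, c3;
     c2, 0, -c3, 0, 0, 0;
     0, c2, 0, -c3, 0, 0]

/-! `Lmat c1 c2 c3` is `K ⊗ I₂` for the skew-symmetric `3 × 3` matrix
`K = !![0, c1, -c2; -c1, 0, c3; c2, -c3, 0]`, which is `x ↦ x × a` with `a = (c3, c2, c1)`, so
`K a = 0`. Placing `a` on the even and on the odd coordinates gives two independent kernel
vectors of `L`, and `ker L ≤ ker L²`. -/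

open Matrix

theorem Matrix.ker_toLin'_le_ker_toLin'_mul {n K : Type*} [Fintype n] [DecidableEq n] [Field K]
    (A B : Matrix n n K) :
    LinearMap.ker (toLin' B) ≤ LinearMap.ker (toLin' (A * B)) := by
  rw [toLin'_mul]
  exact LinearMap.ker_le_ker_comp _ _

theorem Matrix.two_le_finrank_ker_toLin' {n K : Type*} [Fintype n] [DecidableEq n] [Field K]
    {A : Matrix n n K} {v w : n → K} (hv : A *ᵥ v = 0) (hw : A *ᵥ w = 0)
    (hvw : LinearIndependent K ![v, w]) :
    2 ≤ Module.finrank K (LinearMap.ker (toLin' A)) := by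
  have hspan : Submodule.span K (Set.range ![v, w]) ≤ LinearMap.ker (toLin' A) := by
    rw [Submodule.span_le, Set.range_subset_iff]
    intro i
    fin_cases i <;> simpa
  simpa [finrank_span_eq_card hvw] using Submodule.finrank_mono hspan

theorem Lmat_mulVec_even (c1 c2 c3 : ℝ) : Lmat c1 c2 c3 *ᵥ ![c3, 0, c2, 0, c1, 0] = 0 := by
  ext i
  fin_cases i <;> simp [Lmat, mulVec, dotProduct, Fin.sum_univ_six, mul_comm]

theorem Lmat_mulVec_odd (c1 c2 c3 : ℝ) : Lmat c1 c2 c3 *ᵥ ![0, c3, 0, c2, 0, c1] = 0 := by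
  ext i
  fin_cases i <;> simp [Lmat, mulVec, dotProduct, Fin.sum_univ_six, mul_comm]

theorem linearIndependent_Lmat_kernel_vectors {c1 c2 c3 : ℝ}
    (hc : ¬(c1 = 0 ∧ c2 = 0 ∧ c3 = 0)) :
    LinearIndependent ℝ ![![c3, 0, c2, 0, c1, 0], ![0, c3, 0, c2, 0, c1]] := by
  rw [LinearIndependent.pair_iff]
  intro s t hst
  simp [funext_iff, Fin.forall_fin_succ] at hst
  tauto

/-- The vectors `(c₃,0,c₂,0,c₁,0)` and `(0,c₃,0,c₂,0,c₁)` lie in the kernel of `L`, and if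
`(c₁,c₂,c₃) ≠ (0,0,0)` the kernel of `L` (hence of `L²`) has dimension at least `2`. -/
theorem Lmat_kernel (c1 c2 c3 : ℝ) :
    (Lmat c1 c2 c3).mulVec ![c3, 0, c2, 0, c1, 0] = 0 ∧
    (Lmat c1 c2 c3).mulVec ![0, c3, 0, c2, 0, c1] = 0 ∧
    (¬(c1 = 0 ∧ c2 = 0 ∧ c3 = 0) →
      2 ≤ Module.finrank ℝ (LinearMap.ker (Matrix.toLin' (Lmat c1 c2 c3))) ∧
      2 ≤ Module.finrank ℝ (LinearMap.ker (Matrix.toLin' ((Lmat c1 c2 c3) ^ 2)))) := by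
  refine ⟨Lmat_mulVec_even c1 c2 c3, Lmat_mulVec_odd c1 c2 c3, fun hc => ?_⟩
  have hL : 2 ≤ Module.finrank ℝ (LinearMap.ker (toLin' (Lmat c1 c2 c3))) :=
    two_le_finrank_ker_toLin' (Lmat_mulVec_even c1 c2 c3) (Lmat_mulVec_odd c1 c2 c3)
      (linearIndependent_Lmat_kernel_vectors hc)
  refine ⟨hL, hL.trans (Submodule.finrank_mono ?_)⟩
  rw [sq]
  exact ker_toLin'_le_ker_toLin'_mul _ _

end
end

section
/- Let D be the 2×6 matrix D = (1/2)[[−g_x*, −g_y*, 0, g_x, g_y, 0],[0, −g_x*, −g_y*, 0, g_x, g_y]], E the 6×2 matrix E = [[g_x,0],[g_y/2, g_x/2],[0,g_y],[−g_x*,0],[−g_y*/2,−g_x*/2],[0,−g_y*]], and Z = diag(S,S) with S = η[[1+z,0,−1+z],[0,2,0],[−1+z,0,1+z]], for arbitrary g_x, g_y ∈ ℂ and η > 0, z > 0. Then the 2×2 matrix D·Z·E is Hermitian and negative semidefinite, and it is negative definite whenever (g_x, g_y) ≠ (0,0). -/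
open Complex
open scoped ComplexOrder

noncomputable section

/-- The A-grid divergence symbol `D` (includes the factor `1/2` from the lumped area). -/
def Dmat (gx gy : ℂ) : Matrix (Fin 2) (Fin 6) ℂ :=
  (1 / 2 : ℂ) • !![-(starRingEnd ℂ gx), -(starRingEnd ℂ gy), 0, gx, gy, 0;
                   0, -(starRingEnd ℂ gx), -(starRingEnd ℂ gy), 0, gx, gy]

/-- The A-grid strain-rate symbol `E`. -/
def Emat (gx gy : ℂ) : Matrix (Fin 6) (Fin 2) ℂ :=
  !![gx, 0;
     gy / 2, gx / 2;
     0, gy;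
     -(starRingEnd ℂ gx), 0;
     -(starRingEnd ℂ gy) / 2, -(starRingEnd ℂ gx) / 2;
     0, -(starRingEnd ℂ gy)]

/-- The constitutive block matrix `Z = diag(S, S)` with
`S = η[[1+z,0,−1+z],[0,2,0],[−1+z,0,1+z]]`. -/
def Zmat (η z : ℝ) : Matrix (Fin 6) (Fin 6) ℂ :=
  (η : ℂ) • !![1 + (z : ℂ), 0, -1 + (z : ℂ), 0, 0, 0;
               0, 2, 0, 0, 0, 0;
               -1 + (z : ℂ), 0, 1 + (z : ℂ), 0, 0, 0;
               0, 0, 0, 1 + (z : ℂ), 0, -1 + (z : ℂ);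
               0, 0, 0, 0, 2, 0;
               0, 0, 0, -1 + (z : ℂ), 0, 1 + (z : ℂ)]

/-!
Counting the shear component of the strain rate twice, `W = diag(1,2,1,1,2,1)`, the divergence
symbol is `D = -½ Eᴴ W`, so `-D Z E = ½ Eᴴ (W Z) E`. In the coordinates
`(ε₁₁ - ε₂₂, ε₁₂, ε₁₁ + ε₂₂)` of each strain block the Hermitian form of `W Z` is diagonal,
with entries `η, 4η, η z`, hence positive definite for `η, z > 0`. The congruence `Eᴴ (W Z) E`
is therefore positive semidefinite, and positive definite as soon as `E` is injective, which is exactly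
`(g_x, g_y) ≠ 0`.
-/

open Matrix

def Wmat : Matrix (Fin 6) (Fin 6) ℂ := diagonal ![1, 2, 1, 1, 2, 1]

def Pmat : Matrix (Fin 6) (Fin 6) ℂ :=
  !![1, 0, -1, 0, 0, 0;
     0, 1, 0, 0, 0, 0;
     1, 0, 1, 0, 0, 0;
     0, 0, 0, 1, 0, -1;
     0, 0, 0, 0, 1, 0;
     0, 0, 0, 1, 0, 1]

def Vmat (η z : ℝ) : Matrix (Fin 6) (Fin 6) ℂ :=
  diagonal fun i => ((![η, 4 * η, η * z, η, 4 * η, η * z] : Fin 6 → ℝ) i : ℂ)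

lemma Dmat_eq (gx gy : ℂ) : Dmat gx gy = -(1 / 2 : ℂ) • ((Emat gx gy)ᴴ * Wmat) := by
  ext i j
  fin_cases i <;> fin_cases j <;>
    simp [Dmat, Emat, Wmat, mul_apply, Fin.sum_univ_six, map_ofNat]

lemma Wmat_mul_Zmat (η z : ℝ) : Wmat * Zmat η z = Pmatᴴ * Vmat η z * Pmat := by
  ext i j
  fin_cases i <;> fin_cases j <;>
    simp [Zmat, Wmat, Pmat, Vmat, mul_apply, Fin.sum_univ_six] <;> ring

lemma neg_Dmat_mul_Zmat_mul_Emat (gx gy : ℂ) (η z : ℝ) :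
    -(Dmat gx gy * Zmat η z * Emat gx gy) =
      (1 / 2 : ℂ) • ((Pmat * Emat gx gy)ᴴ * Vmat η z * (Pmat * Emat gx gy)) := by
  rw [Dmat_eq, Matrix.smul_mul, Matrix.smul_mul, Matrix.mul_assoc _ Wmat, Wmat_mul_Zmat,
    neg_smul, neg_neg, conjTranspose_mul]
  simp only [Matrix.mul_assoc]

lemma Vmat_posDef {η z : ℝ} (hη : 0 < η) (hz : 0 < z) : (Vmat η z).PosDef :=
  .diagonal fun i => Complex.zero_lt_real.2 <| by fin_cases i <;> simp <;> positivity

lemma Pmat_mulVec_injective : Function.Injective Pmat.mulVec := by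
  refine (injective_iff_map_eq_zero (mulVecLin _)).2 fun x hx => ?_
  rw [mulVecLin_apply] at hx
  have h0 := congrFun hx 0
  have h1 := congrFun hx 1
  have h2 := congrFun hx 2
  have h3 := congrFun hx 3
  have h4 := congrFun hx 4
  have h5 := congrFun hx 5
  simp [Pmat, mulVec, dotProduct, Fin.sum_univ_six] at h0 h1 h2 h3 h4 h5
  ext i
  fin_cases i <;> simp only [Fin.reduceFinMk, Fin.zero_eta, Fin.mk_one, Pi.zero_apply]
  · linear_combination (h0 + h2) / 2
  · exact h1
  · linear_combination (h2 - h0) / 2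
  · linear_combination (h3 + h5) / 2
  · exact h4
  · linear_combination (h5 - h3) / 2

lemma Emat_mulVec_injective {gx gy : ℂ} (hg : ¬(gx = 0 ∧ gy = 0)) :
    Function.Injective (Emat gx gy).mulVec := by
  refine (injective_iff_map_eq_zero (mulVecLin _)).2 fun x hx => ?_
  rw [mulVecLin_apply] at hx
  have h0 := congrFun hx 0
  have h1 := congrFun hx 1
  have h2 := congrFun hx 2
  simp [Emat, mulVec, dotProduct, Fin.sum_univ_two] at h0 h1 h2
  obtain ⟨hx0, hx1⟩ : x 0 = 0 ∧ x 1 = 0 := by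
    rcases eq_or_ne gx 0 with rfl | hgx
    · have hgy : gy ≠ 0 := fun hgy => hg ⟨rfl, hgy⟩
      exact ⟨by simpa [hgy] using h1, h2.resolve_left hgy⟩
    · have hx0 := h0.resolve_left hgx
      exact ⟨hx0, by simpa [hx0, hgx] using h1⟩
  ext i
  fin_cases i
  exacts [hx0, hx1]

/-- The A-grid stress-divergence symbol `D·Z·E` is Hermitian and negative semidefinite,
and negative definite whenever `(g_x, g_y) ≠ (0,0)`. -/
theorem Agrid_symbol_negdef (gx gy : ℂ) (η z : ℝ) (hη : 0 < η) (hz : 0 < z) :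
    (Dmat gx gy * Zmat η z * Emat gx gy).IsHermitian ∧
    (-(Dmat gx gy * Zmat η z * Emat gx gy)).PosSemidef ∧
    (¬(gx = 0 ∧ gy = 0) → (-(Dmat gx gy * Zmat η z * Emat gx gy)).PosDef) := by
  have hV := Vmat_posDef hη hz
  have half_pos : (0 : ℂ) < 1 / 2 := by norm_num [Complex.lt_def]
  have hpsd : (-(Dmat gx gy * Zmat η z * Emat gx gy)).PosSemidef := by
    rw [neg_Dmat_mul_Zmat_mul_Emat]
    exact (hV.posSemidef.conjTranspose_mul_mul_same _).smul half_pos.le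
  refine ⟨by simpa using hpsd.isHermitian.neg, hpsd, fun hg => ?_⟩
  have hPE : Function.Injective (Pmat * Emat gx gy).mulVec :=
    fun x y h => Emat_mulVec_injective hg <| Pmat_mulVec_injective <| by
      simpa only [mulVec_mulVec] using h
  rw [neg_Dmat_mul_Zmat_mul_Emat]
  exact (hV.conjTranspose_mul_mul_same hPE).smul half_pos

end
end
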